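/- arXiv:1907.03932 — 2 statements merged into one kernel-verified Lean document; each statement's English description precedes it below -/
import Mathlib

section
/- Let K ⊂ L be compact convex bodies in ℝ^{n+1} (nonempty interiors, K ⊆ L). Then the n-dimensional Hausdorff measure of ∂K is at most that of ∂L: ℋⁿ(∂K) ≤ ℋⁿ(∂L). -/
open MeasureTheory Set

local notation "⟪" x ", " y "⟫" => @inner ℝ _ _ x y

lemma proj_lipschitz {E : Type*} [NormedAddCommGroup E] [InnerProductSpace ℝ E]
    {K : Set E} {π : E → E} (hπK : ∀ u, π u ∈ K)
    (hπ : ∀ u, ∀ w ∈ K, ⟪u - π u, w - π u⟫ ≤ 0) : LipschitzWith 1 π := by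
  refine LipschitzWith.of_dist_le_mul fun u₁ u₂ => ?_
  rw [NNReal.coe_one, one_mul, dist_eq_norm, dist_eq_norm]
  have h1 := hπ u₁ (π u₂) (hπK u₂)
  have h2 := hπ u₂ (π u₁) (hπK u₁)
  have key : ‖π u₁ - π u₂‖ ^ 2 ≤ ⟪u₁ - u₂, π u₁ - π u₂⟫ := by
    have expand : ⟪u₁ - u₂, π u₁ - π u₂⟫ - ‖π u₁ - π u₂‖ ^ 2 =
        (-⟪u₁ - π u₁, π u₂ - π u₁⟫) + (-⟪u₂ - π u₂, π u₁ - π u₂⟫) := by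
      rw [← real_inner_self_eq_norm_sq]
      simp only [inner_sub_left, inner_sub_right]
      ring
    linarith
  have cs := real_inner_le_norm (u₁ - u₂) (π u₁ - π u₂)
  rcases eq_or_lt_of_le (norm_nonneg (π u₁ - π u₂)) with h | h
  · rw [← h]; exact norm_nonneg _
  · nlinarith

lemma proj_unique {E : Type*} [NormedAddCommGroup E] [InnerProductSpace ℝ E]
    {K : Set E} {π : E → E} (hπK : ∀ u, π u ∈ K)
    (hπ : ∀ u, ∀ w ∈ K, ⟪u - π u, w - π u⟫ ≤ 0)
    {x y : E} (hx : x ∈ K) (hmin : ∀ w ∈ K, ⟪y - x, w - x⟫ ≤ 0) : π y = x := by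
  have h1 := hπ y x hx
  have h2 := hmin (π y) (hπK y)
  have key : ‖x - π y‖ ^ 2 ≤ 0 := by
    have expand : ‖x - π y‖ ^ 2 = ⟪y - π y, x - π y⟫ + ⟪y - x, π y - x⟫ := by
      rw [← real_inner_self_eq_norm_sq]
      simp only [inner_sub_left, inner_sub_right]
      ring
    linarith
  have : x - π y = 0 := by
    have := norm_nonneg (x - π y)
    have hn : ‖x - π y‖ = 0 := by nlinarith
    exact norm_eq_zero.1 hn
  exact (sub_eq_zero.1 this).symm

-- K ⊆ closure (interior K)
lemma conv_subset_closure_interior {E : Type*} [NormedAddCommGroup E] [NormedSpace ℝ E]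
    {K : Set E} (hKconv : Convex ℝ K) (hKint : (interior K).Nonempty) :
    K ⊆ closure (interior K) := by
  intro w hw
  obtain ⟨a, ha⟩ := hKint
  have htend : Filter.Tendsto (fun t : ℝ => t • a + (1 - t) • w) (nhdsWithin 0 (Set.Ioi 0))
      (nhds w) := by
    have : Filter.Tendsto (fun t : ℝ => t • a + (1 - t) • w) (nhds 0) (nhds w) := by
      have hc : Continuous fun t : ℝ => t • a + (1 - t) • w := by fun_prop
      have := hc.tendsto 0
      simpa using this
    exact this.mono_left nhdsWithin_le_nhds
  refine mem_closure_of_tendsto htend ?_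
  filter_upwards [Ioo_mem_nhdsGT_of_mem (by norm_num : (0:ℝ) ∈ Set.Ico 0 1)] with t ht
  exact hKconv.combo_interior_self_mem_interior ha hw ht.1 (by linarith [ht.2]) (by ring)

lemma frontier_subset_image {E : Type*} [NormedAddCommGroup E] [InnerProductSpace ℝ E]
    [CompleteSpace E]
    {K L : Set E} (hKc : IsCompact K) (hLc : IsCompact L)
    (hKconv : Convex ℝ K) (hKint : (interior K).Nonempty) (hKL : K ⊆ L)
    {π : E → E} (hπK : ∀ u, π u ∈ K)
    (hπ : ∀ u, ∀ w ∈ K, ⟪u - π u, w - π u⟫ ≤ 0)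
    (huniq : ∀ {x y : E}, x ∈ K → (∀ w ∈ K, ⟪y - x, w - x⟫ ≤ 0) → π y = x)
    (hKcl : K ⊆ closure (interior K)) :
    frontier K ⊆ π '' frontier L := by
  intro x hx
  have hxK : x ∈ K := hKc.isClosed.frontier_subset hx
  by_cases hxL : x ∈ interior L
  · -- separating functional at x
    obtain ⟨f, hf⟩ := geometric_hahn_banach_open_point hKconv.interior isOpen_interior hx.2
    have hfK : ∀ w ∈ K, f w ≤ f x := by
      intro w hw
      have : w ∈ closure (interior K) := hKcl hw
      have hcl : closure (interior K) ⊆ {z | f z ≤ f x} := by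
        apply closure_minimal
        · intro z hz; exact (hf z hz).le
        · exact isClosed_le (by fun_prop) (by fun_prop)
      exact hcl this
    set v := (InnerProductSpace.toDual ℝ E).symm f with hv
    have hvy : ∀ y, ⟪v, y⟫ = f y := fun y => InnerProductSpace.toDual_symm_apply
    have hvne : v ≠ 0 := by
      intro h0
      obtain ⟨a, ha⟩ := hKint
      have := hf a ha
      have : f a = f x := by
        have h1 : ⟪v, a⟫ = f a := hvy a
        have h2 : ⟪v, x⟫ = f x := hvy x
        rw [h0] at h1 h2
        simp at h1 h2
        rw [← h1, ← h2]
      linarith [hf a ha]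
    set T := {t : ℝ | 0 ≤ t ∧ x + t • v ∈ L} with hT
    have hT0 : (0:ℝ) ∈ T := ⟨le_rfl, by simpa using hKL hxK⟩
    obtain ⟨R, hR⟩ := isBounded_iff_forall_norm_le.1 hLc.isBounded
    have hvpos : 0 < ‖v‖ := norm_pos_iff.2 hvne
    have hTsub : T ⊆ Set.Icc 0 ((R + ‖x‖) / ‖v‖) := by
      rintro t ⟨ht0, htL⟩
      refine ⟨ht0, ?_⟩
      have h1 : ‖x + t • v‖ ≤ R := hR _ htL
      have h2 : t * ‖v‖ = ‖t • v‖ := by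
        rw [norm_smul, Real.norm_eq_abs, abs_of_nonneg ht0]
      have h3 : ‖t • v‖ ≤ R + ‖x‖ := by
        have he : t • v = (x + t • v) - x := by abel
        rw [he]
        have := norm_sub_le (x + t • v) x
        linarith
      rw [le_div_iff₀ hvpos]
      linarith [h2 ▸ h3]
    have hTclosed : IsClosed T := by
      have heq : T = Set.Ici 0 ∩ (fun t : ℝ => x + t • v) ⁻¹' L := rfl
      rw [heq]
      exact isClosed_Ici.inter (hLc.isClosed.preimage (by fun_prop))
    have hTcpt : IsCompact T :=
      (isCompact_Icc.of_isClosed_subset hTclosed hTsub)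
    set t₀ := sSup T with ht₀
    have ht₀T : t₀ ∈ T := hTcpt.sSup_mem ⟨0, hT0⟩
    set y := x + t₀ • v with hy
    have hyL : y ∈ L := ht₀T.2
    have hyfr : y ∈ frontier L := by
      refine ⟨subset_closure hyL, fun hyint => ?_⟩
      obtain ⟨ε, hε, hball⟩ := Metric.isOpen_iff.1 isOpen_interior y hyint
      set δ := ε / (2 * ‖v‖) with hδ
      have hδpos : 0 < δ := by positivity
      have hmem : x + (t₀ + δ) • v ∈ L := by
        have : x + (t₀ + δ) • v ∈ Metric.ball y ε := by
          rw [Metric.mem_ball, dist_eq_norm]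
          have : x + (t₀ + δ) • v - y = δ • v := by
            rw [hy]; module
          rw [this, norm_smul, Real.norm_eq_abs, abs_of_pos hδpos, hδ]
          rw [div_mul_eq_mul_div, mul_comm]
          rw [div_lt_iff₀ (by positivity)]
          nlinarith
        exact interior_subset (hball this)
      have : t₀ + δ ∈ T := ⟨by linarith [ht₀T.1], hmem⟩
      have := le_csSup hTcpt.bddAbove this
      linarith
    refine ⟨y, hyfr, huniq hxK fun w hw => ?_⟩
    have : y - x = t₀ • v := by rw [hy]; abel
    rw [this, real_inner_smul_left]
    have hinner : ⟪v, w - x⟫ = f w - f x := by rw [inner_sub_right, hvy, hvy]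
    rw [hinner]
    have := hfK w hw
    nlinarith [ht₀T.1]
  · -- x is already on the frontier of L
    have hxfr : x ∈ frontier L := ⟨subset_closure (hKL hxK), hxL⟩
    exact ⟨x, hxfr, huniq hxK fun w hw => by simp⟩

theorem stmt_1 (n : ℕ) (K L : Set (EuclideanSpace ℝ (Fin (n + 1))))
    (hKc : IsCompact K) (hLc : IsCompact L)
    (hKconv : Convex ℝ K) (hLconv : Convex ℝ L)
    (hKint : (interior K).Nonempty) (hLint : (interior L).Nonempty)
    (hKL : K ⊆ L) :
    μH[(n : ℝ)] (frontier K) ≤ μH[(n : ℝ)] (frontier L) := by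
  have hKne : K.Nonempty := ⟨_, interior_subset hKint.choose_spec⟩
  have hex : ∀ u : EuclideanSpace ℝ (Fin (n + 1)),
      ∃ v, v ∈ K ∧ ∀ w ∈ K, ⟪u - v, w - v⟫ ≤ 0 := by
    intro u
    obtain ⟨v, hv, hmin⟩ :=
      exists_norm_eq_iInf_of_complete_convex hKne hKc.isComplete hKconv u
    exact ⟨v, hv, (norm_eq_iInf_iff_real_inner_le_zero hKconv hv).1 hmin⟩
  choose π hπK hπ using hex
  have hlip : LipschitzWith 1 π := proj_lipschitz hπK hπ
  have hsurj : frontier K ⊆ π '' frontier L :=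
    frontier_subset_image hKc hLc hKconv hKint hKL hπK hπ
      (fun hx hmin => proj_unique hπK hπ hx hmin)
      (conv_subset_closure_interior hKconv hKint)
  calc μH[(n : ℝ)] (frontier K) ≤ μH[(n : ℝ)] (π '' frontier L) := measure_mono hsurj
    _ ≤ (1 : ENNReal) ^ (n : ℝ) * μH[(n : ℝ)] (frontier L) := by
        simpa using hlip.hausdorffMeasure_image_le (by positivity) (frontier L)
    _ = μH[(n : ℝ)] (frontier L) := by simp
end

section
/- There exists a constant C = C(n) < ∞ such that for every boundary M = ∂Ω of a convex body Ω ⊂ ℝ^{n+1} and every τ > 0, one has τ^{-n/2} ∫_M e^{-|y|²/τ} dℋⁿ(y) ≤ C. -/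
/-!
Let `P` be the nearest-point map onto `closure Ω`; it is `1`-Lipschitz. For `y ∈ ∂Ω` and an outer
normal `ν` at `y`, `P` maps the whole ray `y + tν`, `t ≥ 0`, to `y`. If `|y| ≤ r` this ray crosses
the boundary of the cube `[-r, r]ⁿ⁺¹`, so `∂Ω ∩ B(0, r)` lies in the `P`-image of that cube
boundary and `ℋⁿ(∂Ω ∩ B(0, r)) ≤ A rⁿ` with `A` independent of `Ω`. Summing the Gaussian over
the balls of radius `(k + 1)√τ` gives `∫_{∂Ω} e^{-|y|²/τ} ≤ A τ^{n/2} ∑ₖ e^{-k²} (k + 1)ⁿ`.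
-/

open MeasureTheory Set Metric
open scoped RealInnerProductSpace ENNReal NNReal Pointwise

section NearestPoint

variable {E : Type*} [NormedAddCommGroup E] [InnerProductSpace ℝ E]

/-- The variational inequalities characterising `y₁`, `y₂` as nearest points of `x₁`, `x₂`
in a convex set. -/
lemma norm_sub_le_norm_sub_of_inner_nonpos {x₁ x₂ y₁ y₂ : E} (h₁ : ⟪x₁ - y₁, y₂ - y₁⟫ ≤ 0)
    (h₂ : ⟪x₂ - y₂, y₁ - y₂⟫ ≤ 0) : ‖y₁ - y₂‖ ≤ ‖x₁ - x₂‖ := by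
  have hsq : ‖y₁ - y₂‖ ^ 2 ≤ ⟪x₁ - x₂, y₁ - y₂⟫ := by
    have expand : ⟪x₁ - x₂, y₁ - y₂⟫
        = ‖y₁ - y₂‖ ^ 2 - ⟪x₁ - y₁, y₂ - y₁⟫ - ⟪x₂ - y₂, y₁ - y₂⟫ := by
      rw [← real_inner_self_eq_norm_sq]
      simp only [inner_sub_left, inner_sub_right, real_inner_comm]
      ring
    linarith
  have hcs := real_inner_le_norm (x₁ - x₂) (y₁ - y₂)
  nlinarith [norm_nonneg (x₁ - x₂), norm_nonneg (y₁ - y₂)]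

variable [CompleteSpace E]

lemma exists_lipschitzWith_one_nearestPoint {s : Set E} (hs : Convex ℝ s) (hsc : IsClosed s)
    (hne : s.Nonempty) :
    ∃ P : E → E, LipschitzWith 1 P ∧ ∀ x, P x ∈ s ∧ ∀ z ∈ s, ⟪x - P x, z - P x⟫ ≤ 0 := by
  have hproj (x : E) : ∃ y ∈ s, ∀ z ∈ s, ⟪x - y, z - y⟫ ≤ 0 := by
    obtain ⟨y, hy, hmin⟩ := exists_norm_eq_iInf_of_complete_convex hne hsc.isComplete hs x
    exact ⟨y, hy, (norm_eq_iInf_iff_real_inner_le_zero hs hy).1 hmin⟩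
  choose P hPs hPvar using hproj
  refine ⟨P, LipschitzWith.of_dist_le_mul fun x₁ x₂ => ?_, fun x => ⟨hPs x, hPvar x⟩⟩
  rw [NNReal.coe_one, one_mul, dist_eq_norm, dist_eq_norm]
  exact norm_sub_le_norm_sub_of_inner_nonpos (hPvar x₁ _ (hPs x₂)) (hPvar x₂ _ (hPs x₁))

lemma Convex.exists_inner_nonpos_of_mem_frontier {Ω : Set E} (hΩ : Convex ℝ Ω)
    (hint : (interior Ω).Nonempty) {y : E} (hy : y ∈ frontier Ω) :
    ∃ ν : E, ν ≠ 0 ∧ ∀ z ∈ closure Ω, ⟪ν, z - y⟫ ≤ 0 := by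
  obtain ⟨f, hf⟩ := geometric_hahn_banach_open_point hΩ.interior isOpen_interior hy.2
  have hle : closure Ω ⊆ {z | f z ≤ f y} := by
    rw [← hΩ.closure_interior_eq_closure_of_nonempty_interior hint]
    exact (closure_mono hf).trans (closure_lt_subset_le f.continuous continuous_const)
  refine ⟨(InnerProductSpace.toDual ℝ E).symm f, ?_, fun z hz => ?_⟩
  · obtain ⟨x₀, hx₀⟩ := hint
    intro h0
    have hf0 : f = 0 := (InnerProductSpace.toDual ℝ E).symm.map_eq_zero_iff.1 h0
    simpa [hf0] using hf x₀ hx₀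
  · rw [inner_sub_right, InnerProductSpace.toDual_symm_apply,
      InnerProductSpace.toDual_symm_apply, sub_nonpos]
    exact hle hz

variable [MeasurableSpace E] [BorelSpace E]

/-- The nearest-point map onto `closure Ω` collapses the ray from `y ∈ frontier Ω` along an
outer normal onto `y`, so it maps `T` onto a superset of `frontier Ω ∩ K`. -/
theorem hausdorffMeasure_frontier_inter_le {Ω K T : Set E} (hΩ : Convex ℝ Ω)
    (hint : (interior Ω).Nonempty)
    (hT : ∀ y ∈ K, ∀ ν : E, ν ≠ 0 → ∃ t : ℝ, 0 ≤ t ∧ y + t • ν ∈ T)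
    {d : ℝ} (hd : 0 ≤ d) : μH[d] (frontier Ω ∩ K) ≤ μH[d] T := by
  obtain ⟨P, hPlip, hP⟩ := exists_lipschitzWith_one_nearestPoint hΩ.closure isClosed_closure
    (hint.mono (interior_subset.trans subset_closure))
  have hcover : frontier Ω ∩ K ⊆ P '' T := by
    rintro y ⟨hyΩ, hyK⟩
    obtain ⟨ν, hν, hνΩ⟩ := hΩ.exists_inner_nonpos_of_mem_frontier hint hyΩ
    obtain ⟨t, ht, hxT⟩ := hT y hyK ν hν
    refine ⟨y + t • ν, hxT, ?_⟩
    have hvar : ∀ z ∈ closure Ω, ⟪y + t • ν - y, z - y⟫ ≤ 0 := fun z hz => by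
      rw [add_sub_cancel_left, real_inner_smul_left]
      exact mul_nonpos_of_nonneg_of_nonpos ht (hνΩ z hz)
    have := norm_sub_le_norm_sub_of_inner_nonpos
      ((hP (y + t • ν)).2 y (frontier_subset_closure hyΩ)) (hvar _ (hP (y + t • ν)).1)
    rwa [sub_self, norm_zero, norm_le_zero_iff, sub_eq_zero] at this
  calc μH[d] (frontier Ω ∩ K) ≤ μH[d] (P '' T) := measure_mono hcover
    _ ≤ (1 : ℝ≥0) ^ d * μH[d] T := hPlip.hausdorffMeasure_image_le hd T
    _ = μH[d] T := by simp

end NearestPoint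

lemma exists_nonneg_norm_add_smul_eq {F : Type*} [NormedAddCommGroup F] [NormedSpace ℝ F]
    {y ν : F} {r : ℝ} (hy : ‖y‖ ≤ r) (hν : ν ≠ 0) : ∃ t : ℝ, 0 ≤ t ∧ ‖y + t • ν‖ = r := by
  set T := (r + ‖y‖) / ‖ν‖
  have hT : 0 ≤ T := div_nonneg (by linarith [norm_nonneg y]) (norm_nonneg ν)
  have hrT : r ≤ ‖y + T • ν‖ := by
    have hTν : ‖T • ν‖ = r + ‖y‖ := by
      rw [norm_smul, Real.norm_of_nonneg hT, div_mul_cancel₀ _ (norm_ne_zero_iff.2 hν)]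
    have := norm_sub_le (y + T • ν) y
    rw [add_sub_cancel_left, hTν] at this
    linarith
  have hcont : Continuous fun t : ℝ => ‖y + t • ν‖ := by fun_prop
  obtain ⟨t, ht, hrt⟩ := intermediate_value_Icc hT hcont.continuousOn
    (⟨by simpa using hy, hrT⟩ : r ∈ Icc (‖y + (0 : ℝ) • ν‖) ‖y + T • ν‖)
  exact ⟨t, ht.1, hrt⟩

namespace EuclideanSpace

/-- The boundary of the cube `[-r, r]ᵐ`, i.e. the sphere of radius `r` for the sup norm. -/
def cubeFrontier (m : ℕ) (r : ℝ) : Set (EuclideanSpace ℝ (Fin m)) :=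
  WithLp.ofLp ⁻¹' sphere 0 r

lemma norm_ofLp_le {m : ℕ} (x : EuclideanSpace ℝ (Fin m)) : ‖WithLp.ofLp x‖ ≤ ‖x‖ :=
  (pi_norm_le_iff_of_nonneg (norm_nonneg x)).2 fun i => PiLp.norm_apply_le x i

lemma exists_nonneg_add_smul_mem_cubeFrontier {m : ℕ} {r : ℝ} {y : EuclideanSpace ℝ (Fin m)}
    (hy : y ∈ closedBall 0 r) {ν : EuclideanSpace ℝ (Fin m)} (hν : ν ≠ 0) :
    ∃ t : ℝ, 0 ≤ t ∧ y + t • ν ∈ cubeFrontier m r := by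
  obtain ⟨t, ht, hyt⟩ := exists_nonneg_norm_add_smul_eq
    ((norm_ofLp_le y).trans (mem_closedBall_zero_iff.1 hy)) (mt (WithLp.ofLp_eq_zero 2).1 hν)
  exact ⟨t, ht, by simpa [cubeFrontier] using hyt⟩

lemma cubeFrontier_eq_smul {m : ℕ} {r : ℝ} (hr : 0 < r) :
    cubeFrontier m r = r • cubeFrontier m 1 := by
  ext x
  rw [mem_smul_set_iff_inv_smul_mem₀ hr.ne']
  simp only [cubeFrontier, mem_preimage, mem_sphere_zero_iff_norm, WithLp.ofLp_smul, norm_smul,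
    norm_inv, Real.norm_of_nonneg hr.le]
  constructor <;> intro h
  · rw [h, inv_mul_cancel₀ hr.ne']
  · field_simp at h; linarith

lemma isometry_toLp_insertNth {n : ℕ} (i : Fin (n + 1)) (c : ℝ) :
    Isometry fun u : EuclideanSpace ℝ (Fin n) =>
      (WithLp.toLp 2 (i.insertNth c (WithLp.ofLp u)) : EuclideanSpace ℝ (Fin (n + 1))) := by
  refine Isometry.of_dist_eq fun u v => ?_
  rw [EuclideanSpace.dist_eq, EuclideanSpace.dist_eq, Fin.sum_univ_succAbove _ i]
  simp

/-- The cube boundary is the union of `2 (n + 1)` faces, each an isometric copy of the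
`n`-dimensional cube, which is compact and so has finite `μH[n]`-measure. -/
lemma hausdorffMeasure_cubeFrontier_one_lt_top (n : ℕ) :
    μH[(n : ℝ)] (cubeFrontier (n + 1) 1) < ∞ := by
  set B : Set (EuclideanSpace ℝ (Fin n)) := WithLp.toLp 2 '' closedBall 0 1
  set φ : Fin (n + 1) → ℝ → EuclideanSpace ℝ (Fin n) → EuclideanSpace ℝ (Fin (n + 1)) :=
    fun i c u => WithLp.toLp 2 (i.insertNth c (WithLp.ofLp u))
  have hB : μH[(n : ℝ)] B < ∞ :=
    ((isCompact_closedBall _ _).image (PiLp.continuous_toLp 2 _)).measure_lt_top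
  have hface (i : Fin (n + 1)) (c : ℝ) : μH[(n : ℝ)] (φ i c '' B) < ∞ := by
    rwa [(isometry_toLp_insertNth i c).hausdorffMeasure_image (.inl n.cast_nonneg)]
  have hcover : cubeFrontier (n + 1) 1 ⊆ ⋃ i, (φ i 1 '' B ∪ φ i (-1) '' B) := by
    intro x hx
    have hx1 : ‖WithLp.ofLp x‖ = 1 := mem_sphere_zero_iff_norm.1 hx
    obtain ⟨i, hi⟩ := Finite.exists_max fun j => |x j|
    have hxi : |x i| = 1 := by
      refine le_antisymm ?_ ?_
      · simpa [hx1] using norm_le_pi_norm (WithLp.ofLp x) i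
      · rw [← hx1]
        exact (pi_norm_le_iff_of_nonneg (abs_nonneg _)).2 hi
    have hu : WithLp.toLp 2 (i.removeNth (WithLp.ofLp x)) ∈ B := by
      refine mem_image_of_mem _ (mem_closedBall_zero_iff.2 ?_)
      exact (pi_norm_le_iff_of_nonneg zero_le_one).2 fun k => hxi ▸ hi (i.succAbove k)
    have hφ : φ i (x i) (WithLp.toLp 2 (i.removeNth (WithLp.ofLp x))) = x := by
      simp only [φ]
      exact congrArg (WithLp.toLp 2) (i.insertNth_self_removeNth (WithLp.ofLp x))
    refine mem_iUnion.2 ⟨i, ?_⟩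
    rcases abs_eq zero_le_one |>.1 hxi with h | h
    · exact .inl ⟨_, hu, h ▸ hφ⟩
    · exact .inr ⟨_, hu, h ▸ hφ⟩
  refine (measure_mono hcover).trans_lt ((measure_iUnion_fintype_le _ _).trans_lt ?_)
  exact ENNReal.sum_lt_top.2 fun i _ =>
    (measure_union_le _ _).trans_lt (ENNReal.add_lt_top.2 ⟨hface i 1, hface i (-1)⟩)

lemma hausdorffMeasure_cubeFrontier (n : ℕ) {r : ℝ} (hr : 0 < r) :
    μH[(n : ℝ)] (cubeFrontier (n + 1) r) =
      μH[(n : ℝ)] (cubeFrontier (n + 1) 1) * ENNReal.ofReal r ^ n := by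
  rw [cubeFrontier_eq_smul hr, Measure.hausdorffMeasure_smul₀ n.cast_nonneg hr.ne',
    ENNReal.smul_def, smul_eq_mul, mul_comm, NNReal.rpow_natCast, ENNReal.coe_pow,
    ← ENNReal.ofReal_coe_nnreal, coe_nnnorm, Real.norm_of_nonneg hr.le]

theorem hausdorffMeasure_frontier_inter_closedBall_le {n : ℕ}
    {Ω : Set (EuclideanSpace ℝ (Fin (n + 1)))} (hΩ : Convex ℝ Ω) (hint : (interior Ω).Nonempty)
    {r : ℝ} (hr : 0 < r) :
    μH[(n : ℝ)] (frontier Ω ∩ closedBall 0 r) ≤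
      μH[(n : ℝ)] (cubeFrontier (n + 1) 1) * ENNReal.ofReal r ^ n := by
  rw [← hausdorffMeasure_cubeFrontier n hr]
  exact hausdorffMeasure_frontier_inter_le hΩ hint
    (fun _ hy _ hν => exists_nonneg_add_smul_mem_cubeFrontier hy hν) n.cast_nonneg

end EuclideanSpace

noncomputable def gaussianShellSum (n : ℕ) : ℝ≥0∞ :=
  ∑' k : ℕ, ENNReal.ofReal (Real.exp (-(k : ℝ) ^ 2)) * ENNReal.ofReal ((k : ℝ) + 1) ^ n

lemma summable_exp_neg_sq_mul_succ_pow (n : ℕ) :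
    Summable fun k : ℕ => Real.exp (-(k : ℝ) ^ 2) * ((k : ℝ) + 1) ^ n := by
  have hsum : Summable fun k : ℕ =>
      Real.exp 1 * (((k + 1 : ℕ) : ℝ) ^ n * Real.exp (-1 * (k + 1 : ℕ))) :=
    ((summable_nat_add_iff 1).2 (Real.summable_pow_mul_exp_neg_nat_mul n one_pos)).mul_left _
  refine hsum.of_nonneg_of_le (fun k => by positivity) fun k => ?_
  have hk : (k : ℝ) ≤ (k : ℝ) ^ 2 := by
    rcases Nat.eq_zero_or_pos k with rfl | hk
    · simp
    · nlinarith [(Nat.one_le_cast (α := ℝ)).2 hk]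
  calc Real.exp (-(k : ℝ) ^ 2) * ((k : ℝ) + 1) ^ n ≤ Real.exp (-k) * ((k : ℝ) + 1) ^ n := by
        gcongr
    _ = _ := by
        rw [mul_left_comm, ← Real.exp_add]
        push_cast
        ring_nf

lemma gaussianShellSum_ne_top (n : ℕ) : gaussianShellSum n ≠ ∞ := by
  have h : gaussianShellSum n =
      ENNReal.ofReal (∑' k : ℕ, Real.exp (-(k : ℝ) ^ 2) * ((k : ℝ) + 1) ^ n) := by
    rw [ENNReal.ofReal_tsum_of_nonneg (fun k => by positivity) (summable_exp_neg_sq_mul_succ_pow n)]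
    exact tsum_congr fun k => by
      rw [ENNReal.ofReal_mul (Real.exp_pos _).le, ENNReal.ofReal_pow (by positivity)]
  exact h ▸ ENNReal.ofReal_ne_top

/-- On the ball of radius `(k + 1)√τ` outside the ball of radius `k√τ` the integrand is
at most `e^{-k²}`. -/
theorem lintegral_exp_neg_norm_sq_div_le {E : Type*} [SeminormedAddCommGroup E]
    [MeasurableSpace E] [OpensMeasurableSpace E] {μ : Measure E} {n : ℕ} {A : ℝ≥0∞}
    (hμ : ∀ r, 0 < r → μ (closedBall 0 r) ≤ A * ENNReal.ofReal r ^ n) {τ : ℝ} (hτ : 0 < τ) :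
    ∫⁻ y, ENNReal.ofReal (Real.exp (-‖y‖ ^ 2 / τ)) ∂μ ≤
      A * gaussianShellSum n * ENNReal.ofReal √τ ^ n := by
  set s := √τ
  have hs : 0 < s := Real.sqrt_pos.2 hτ
  set B : ℕ → Set E := fun k => closedBall 0 (((k : ℝ) + 1) * s)
  have hpoint (y : E) : ENNReal.ofReal (Real.exp (-‖y‖ ^ 2 / τ)) ≤
      ∑' k : ℕ, (B k).indicator (fun _ => ENNReal.ofReal (Real.exp (-(k : ℝ) ^ 2))) y := by
    set k := ⌊‖y‖ / s⌋₊
    have hk : (k : ℝ) * s ≤ ‖y‖ := (le_div_iff₀ hs).1 (Nat.floor_le (by positivity))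
    have hky : y ∈ B k :=
      mem_closedBall_zero_iff.2 ((div_le_iff₀ hs).1 (Nat.lt_floor_add_one _).le)
    refine le_trans ?_ (ENNReal.le_tsum k)
    rw [indicator_of_mem hky]
    refine ENNReal.ofReal_le_ofReal (Real.exp_le_exp.2 ?_)
    rw [neg_div, neg_le_neg_iff, le_div_iff₀ hτ, ← Real.sq_sqrt hτ.le, ← mul_pow]
    exact pow_le_pow_left₀ (by positivity) hk 2
  calc ∫⁻ y, ENNReal.ofReal (Real.exp (-‖y‖ ^ 2 / τ)) ∂μ
      ≤ ∫⁻ y, ∑' k : ℕ,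
          (B k).indicator (fun _ => ENNReal.ofReal (Real.exp (-(k : ℝ) ^ 2))) y ∂μ :=
        lintegral_mono hpoint
    _ = ∑' k : ℕ, ENNReal.ofReal (Real.exp (-(k : ℝ) ^ 2)) * μ (B k) := by
        rw [lintegral_tsum fun k =>
          (measurable_const.indicator measurableSet_closedBall).aemeasurable]
        simp_rw [lintegral_indicator_const measurableSet_closedBall]
        rfl
    _ ≤ ∑' k : ℕ, ENNReal.ofReal (Real.exp (-(k : ℝ) ^ 2)) *
          (A * ENNReal.ofReal (((k : ℝ) + 1) * s) ^ n) :=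
        ENNReal.tsum_le_tsum fun k => by gcongr; exact hμ _ (by positivity)
    _ = A * gaussianShellSum n * ENNReal.ofReal s ^ n := by
        rw [gaussianShellSum, ← ENNReal.tsum_mul_left, ← ENNReal.tsum_mul_right]
        refine tsum_congr fun k => ?_
        rw [ENNReal.ofReal_mul (by positivity), mul_pow]
        ring

open EuclideanSpace in
theorem stmt_2 (n : ℕ) :
    ∃ C : ℝ, ∀ Ω : Set (EuclideanSpace ℝ (Fin (n + 1))),
      Convex ℝ Ω → (interior Ω).Nonempty → IsCompact Ω →
      ∀ τ : ℝ, 0 < τ →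
        τ ^ (-(n : ℝ) / 2) *
          ∫ y in frontier Ω, Real.exp (-‖y‖ ^ 2 / τ) ∂(μH[(n : ℝ)]) ≤ C := by
  set B := μH[(n : ℝ)] (cubeFrontier (n + 1) 1) * gaussianShellSum n
  have hB : B ≠ ∞ := ENNReal.mul_ne_top (hausdorffMeasure_cubeFrontier_one_lt_top n).ne
    (gaussianShellSum_ne_top n)
  refine ⟨B.toReal, fun Ω hΩ hint _ τ hτ => ?_⟩
  have hlint := lintegral_exp_neg_norm_sq_div_le (μ := μH[(n : ℝ)].restrict (frontier Ω))
    (fun r hr => by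
      rw [Measure.restrict_apply measurableSet_closedBall, inter_comm]
      exact hausdorffMeasure_frontier_inter_closedBall_le hΩ hint hr) hτ
  have hintegral : ∫ y in frontier Ω, Real.exp (-‖y‖ ^ 2 / τ) ∂(μH[(n : ℝ)]) ≤
      B.toReal * τ ^ ((n : ℝ) / 2) := by
    rw [integral_eq_lintegral_of_nonneg_ae (ae_of_all _ fun y => (Real.exp_pos _).le)
      (by fun_prop)]
    calc _ ≤ (B * ENNReal.ofReal √τ ^ n).toReal :=
          ENNReal.toReal_mono (ENNReal.mul_ne_top hB (by simp)) hlint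
      _ = _ := by
          rw [ENNReal.toReal_mul, ENNReal.toReal_pow, ENNReal.toReal_ofReal (Real.sqrt_nonneg τ),
            Real.rpow_div_two_eq_sqrt _ hτ.le, Real.rpow_natCast]
  calc τ ^ (-(n : ℝ) / 2) * ∫ y in frontier Ω, Real.exp (-‖y‖ ^ 2 / τ) ∂(μH[(n : ℝ)])
      ≤ τ ^ (-(n : ℝ) / 2) * (B.toReal * τ ^ ((n : ℝ) / 2)) := by gcongr
    _ = B.toReal := by
      rw [mul_left_comm, ← Real.rpow_add hτ, neg_div, neg_add_cancel, Real.rpow_zero, mul_one]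
end
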